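/- Let M be the free R-module on nine generators r7, s7, r6, s6, x3, y3, x2, y2, x0, and let d : M → M be the R-linear map with d(r7) = U·s7 + r6; d(s7) = s6; d(r6) = U·s6; d(y3) = s6; d(x3) = U²·y3 + U·r6 + y2; d(x2) = U²·y2 + x0; and d(s6) = d(y2) = d(x0) = 0. Then d ∘ d = 0, and the homology H = ker d / im d is a free R-module of rank 1, generated by the class of y3 + s7. -/
import Mathlib


noncomputable section

/-- `R = 𝔽₂[U]`, the polynomial ring in one variable over the field with two elements. -/
abbrev R : Type := Polynomial (ZMod 2)

/-- The variable `U` of `R = 𝔽₂[U]`. -/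
def U : R := Polynomial.X

/-- The free `R`-module on nine generators. -/
abbrev M : Type := Fin 9 → R

def r7 : M := Pi.single 0 1
def s7 : M := Pi.single 1 1
def r6 : M := Pi.single 2 1
def s6 : M := Pi.single 3 1
def x3 : M := Pi.single 4 1
def y3 : M := Pi.single 5 1
def x2 : M := Pi.single 6 1
def y2 : M := Pi.single 7 1
def x0 : M := Pi.single 8 1

lemma two_eq_zero : (2 : R) = 0 := by
  have := CharP.cast_eq_zero R 2; simpa using this

lemma decomp (m : M) : m = m 0 • r7 + m 1 • s7 + m 2 • r6 + m 3 • s6 + m 4 • x3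
    + m 5 • y3 + m 6 • x2 + m 7 • y2 + m 8 • x0 := by
  funext j
  fin_cases j <;> simp [r7, s7, r6, s6, x3, y3, x2, y2, x0, Pi.single_apply]

/-- The explicit formula for the differential. -/
def g (m : M) : M := fun j =>
  if j = 1 then U * m 0 else if j = 2 then m 0 + U * m 4
  else if j = 3 then m 1 + U * m 2 + m 5 else if j = 5 then U ^ 2 * m 4
  else if j = 7 then m 4 + U ^ 2 * m 6 else if j = 8 then m 6 else 0

/-- Let `M` be the free `R`-module on the nine generators `r7, s7, r6, s6, x3, y3, x2, y2, x0`,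
and let `d : M → M` be the `R`-linear map with `d r7 = U • s7 + r6`, `d s7 = s6`,
`d r6 = U • s6`, `d y3 = s6`, `d x3 = U² • y3 + U • r6 + y2`, `d x2 = U² • y2 + x0`, and
`d s6 = d y2 = d x0 = 0`.  Then `d ∘ d = 0`, and the homology `H = ker d / im d` is a free
`R`-module of rank one generated by the class of `y3 + s7`, i.e. the map `R → H`,
`r ↦ r • [y3 + s7]`, is bijective. -/
theorem homology_free_rank_one (d : M →ₗ[R] M)
    (hr7 : d r7 = U • s7 + r6)
    (hs7 : d s7 = s6)
    (hr6 : d r6 = U • s6)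
    (hy3 : d y3 = s6)
    (hx3 : d x3 = (U ^ 2) • y3 + U • r6 + y2)
    (hx2 : d x2 = (U ^ 2) • y2 + x0)
    (hs6 : d s6 = 0) (hy2 : d y2 = 0) (hx0 : d x0 = 0) :
    d ∘ₗ d = 0 ∧
    ∃ hz : y3 + s7 ∈ LinearMap.ker d,
      Function.Bijective
        (LinearMap.toSpanSingleton R
          (LinearMap.ker d ⧸ (LinearMap.range d).comap (LinearMap.ker d).subtype)
          (Submodule.Quotient.mk ⟨y3 + s7, hz⟩)) := by
  have hd : ∀ m, d m = g m := by
    intro m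
    conv_lhs => rw [decomp m]
    simp only [map_add, map_smul, hr7, hs7, hr6, hs6, hy3, hx3, hx2, hy2, hx0]
    funext j
    fin_cases j <;>
      simp [g, r7, s7, r6, s6, x3, y3, x2, y2, x0, Pi.single_apply] <;> ring
  have hXne : (U : R) ≠ 0 := Polynomial.X_ne_zero
  -- d ∘ d = 0
  have hdd : d ∘ₗ d = 0 := by
    apply LinearMap.ext
    intro m
    rw [LinearMap.comp_apply, hd, hd, LinearMap.zero_apply]
    funext j
    fin_cases j <;>
      simp [g] <;>
      first
        | ring1
        | linear_combination (U * m 0 + U ^ 2 * m 4) * two_eq_zero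
  refine ⟨hdd, ?_, ?_⟩
  · -- y3 + s7 ∈ ker d
    rw [LinearMap.mem_ker, map_add, hy3, hs7]
    funext j
    fin_cases j <;> simp [s6, Pi.single_apply] <;> linear_combination two_eq_zero
  constructor
  · -- injectivity
    rw [injective_iff_map_eq_zero]
    intro r hr
    rw [LinearMap.toSpanSingleton_apply, ← Submodule.Quotient.mk_smul,
      Submodule.Quotient.mk_eq_zero, Submodule.mem_comap] at hr
    obtain ⟨q, hq⟩ := hr
    rw [hd] at hq
    have h8 := congrFun hq 8
    have h7 := congrFun hq 7
    have h5 := congrFun hq 5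
    simp [g, y3, s7, Pi.single_apply] at h8 h7 h5
    have hq4 : q 4 = 0 := by
      have := h7
      rw [h8] at this
      simpa using this
    rw [hq4] at h5
    simpa using h5.symm
  · -- surjectivity
    intro c
    obtain ⟨⟨m, hm⟩, rfl⟩ := Submodule.Quotient.mk_surjective _ c
    have hgm : g m = 0 := by rw [← hd]; exact LinearMap.mem_ker.mp hm
    have h2 := congrFun hgm 2
    have h3 := congrFun hgm 3
    have h5 := congrFun hgm 5
    have h8 := congrFun hgm 8
    simp [g] at h2 h3 h5 h8
    have hm4 : m 4 = 0 := by
      rcases h5 with h | h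
      · exact absurd h hXne
      · exact h
    have hm0 : m 0 = 0 := by rw [hm4] at h2; simpa using h2
    have hm5 : m 5 = m 1 + U * m 2 := by
      linear_combination h3 - (m 1 + U * m 2) * two_eq_zero
    refine ⟨m 1 + U * m 2 + U ^ 2 * m 7 + U ^ 4 * m 8, ?_⟩
    rw [LinearMap.toSpanSingleton_apply, ← Submodule.Quotient.mk_smul,
      Submodule.Quotient.eq, Submodule.mem_comap]
    refine ⟨(fun j => if j = 0 then m 2 + U * m 7 + U ^ 3 * m 8 else if j = 1 then m 3
      else if j = 4 then m 7 + U ^ 2 * m 8 else if j = 6 then m 8 else 0 : M), ?_⟩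
    rw [hd]
    funext j
    fin_cases j <;>
      simp [g, y3, s7, hm0, hm4, h8, hm5, Pi.single_apply] <;>
      first
        | ring1
        | linear_combination (m 2 + U * m 7 + U ^ 3 * m 8) * two_eq_zero
        | linear_combination (m 3) * two_eq_zero
        | linear_combination (m 7 + U ^ 2 * m 8) * two_eq_zero
        | linear_combination (m 8) * two_eq_zero
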